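/- arXiv:1606.00389 — 11 statements merged into one kernel-verified Lean document; each statement's English description precedes it below -/
import Mathlib

section
/- Let V be a finite type and f : Finset V → ℝ a normalized, monotone non-decreasing, submodular set function. Then for any S ⊆ V, any u ∈ S, and any v, w ∈ V with v ∉ S and w ∉ S, one has f(((S \ {u}) ∪ {v}) ∪ {w}) − f((S \ {u}) ∪ {v}) ≤ (f(S ∪ {w}) − f(S)) + (f(S ∪ {v}) − f((S \ {u}) ∪ {v})). -/
/-- Swap lemma for normalized, monotone, submodular set functions (Lemma "swap"
in the stream clipper paper): for `u ∈ S`, `v, w ∉ S`,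
`f(((S \ {u}) ∪ {v}) ∪ {w}) − f((S \ {u}) ∪ {v})
  ≤ (f(S ∪ {w}) − f(S)) + (f(S ∪ {v}) − f((S \ {u}) ∪ {v}))`. -/
theorem swap_marginal_gain_bound {V : Type*} [Fintype V] [DecidableEq V]
    (f : Finset V → ℝ)
    (hnorm : f ∅ = 0)
    (hmono : ∀ A B : Finset V, A ⊆ B → f A ≤ f B)
    (hsub : ∀ (A B : Finset V) (v : V), A ⊆ B → v ∉ B →
      f (B ∪ {v}) - f B ≤ f (A ∪ {v}) - f A)
    (S : Finset V) (u v w : V) (hu : u ∈ S) (hv : v ∉ S) (hw : w ∉ S) :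
    f (((S \ {u}) ∪ {v}) ∪ {w}) - f ((S \ {u}) ∪ {v}) ≤
      (f (S ∪ {w}) - f S) + (f (S ∪ {v}) - f ((S \ {u}) ∪ {v})) := by
  by_cases hvw : w = v
  · subst hvw
    have h1 : ((S \ {u}) ∪ {w}) ∪ {w} = (S \ {u}) ∪ {w} := by
      ext x; simp [or_assoc]
    rw [h1]
    have h2 : f S ≤ f (S ∪ {w}) := hmono _ _ Finset.subset_union_left
    have h3 : f ((S \ {u}) ∪ {w}) ≤ f (S ∪ {w}) := by
      apply hmono
      exact Finset.union_subset_union (Finset.sdiff_subset) (le_refl _)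
    linarith
  · have hwv : w ∉ S ∪ {v} := by simp [hw, hvw]
    have key : f ((S ∪ {v}) ∪ {w}) - f (S ∪ {v}) ≤ f (S ∪ {w}) - f S :=
      hsub S (S ∪ {v}) w Finset.subset_union_left hwv
    have hmono1 : f (((S \ {u}) ∪ {v}) ∪ {w}) ≤ f ((S ∪ {v}) ∪ {w}) := by
      apply hmono
      exact Finset.union_subset_union
        (Finset.union_subset_union Finset.sdiff_subset (le_refl _)) (le_refl _)
    linarith
end

section
/- Let k, s, τ⁻, τ⁺, F be real numbers with k > 0, 0 ≤ s ≤ k, τ⁻ ≥ 0, τ⁺ ≥ 0, and F ≥ k·τ⁻ + s·τ⁺. Then for every x with 0 ≤ x < k, g(x) ≥ min(F − k·τ⁻, (1 − exp((s−k)/k))·F + exp((s−k)/k)·s·τ⁺); that is, the infimum of g over [0, k] is attained (in the limit) at one of the two endpoints, with values g(k) = F − k·τ⁻ and g(0) = (1 − exp((s−k)/k))·F + exp((s−k)/k)·s·τ⁺. -/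
/-! Put `c = k - s`, `d = k - x` and `B = F - k τ⁻ - s τ⁺`. Then
`g(x) - (F - k τ⁻) = e^{-c/d} (τ⁻ d (e^{c/d} - 1) - B)`. As `d` decreases from `k` to `0`, the
first factor is positive and decreasing, while the second factor is increasing because
`d (e^{c/d} - 1) = c · (e^u - 1)/u` at `u = c/d`, a slope of the convex function `exp`.
A product of two such factors is either nonnegative or at least its value at `d = k`. -/

open Real Set

theorem antitoneOn_mul_exp_div_sub_one {c : ℝ} (hc : 0 ≤ c) :
    AntitoneOn (fun d : ℝ => d * (exp (c / d) - 1)) (Ioi 0) := by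
  intro d hd d' hd' hdd'
  rcases hc.eq_or_lt with rfl | hc
  · simp
  have hd : 0 < d := hd
  have hd' : 0 < d' := hd'
  have slope := convexOn_exp.secant_mono (a := 0) (mem_univ _) (mem_univ (c / d'))
    (mem_univ (c / d)) (by positivity) (by positivity)
    (div_le_div_of_nonneg_left hc.le hd hdd')
  simp only [exp_zero, sub_zero, div_div_eq_mul_div] at slope
  rw [div_le_div_iff_of_pos_right hc] at slope
  simpa only [mul_comm] using slope

theorem min_zero_le_mul_of_le {w₀ w m₀ m : ℝ} (hw : 0 ≤ w) (hww₀ : w ≤ w₀) (hm₀m : m₀ ≤ m) :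
    min 0 (w₀ * m₀) ≤ w * m := by
  rcases le_or_gt 0 m with hm | hm
  · exact (min_le_left _ _).trans (mul_nonneg hw hm)
  · exact (min_le_right _ _).trans (by nlinarith)

theorem bound_min_at_endpoints_general (k s τm τp F : ℝ)
    (hsk : s ≤ k) (hτm : 0 ≤ τm) :
    ∀ x : ℝ, 0 ≤ x → x < k →
      min (F - k * τm) ((1 - Real.exp ((s - k) / k)) * F + Real.exp ((s - k) / k) * s * τp)
        ≤ (1 - Real.exp (-(k - s) / (k - x))) * (F - x * τm)
          + Real.exp (-(k - s) / (k - x)) * s * τp := by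
  intro x hx0 hxk
  have hd : 0 < k - x := by linarith
  have hinv (d : ℝ) : exp (-(k - s) / d) * exp ((k - s) / d) = 1 := by
    rw [← exp_add, neg_div, neg_add_cancel, exp_zero]
  have hslope := antitoneOn_mul_exp_div_sub_one (sub_nonneg.2 hsk) hd
    (show (0 : ℝ) < k by linarith) (by linarith : k - x ≤ k)
  have hweight : exp (-(k - s) / (k - x)) ≤ exp (-(k - s) / k) := by
    simp only [neg_div, exp_le_exp, neg_le_neg_iff]
    exact div_le_div_of_nonneg_left (sub_nonneg.2 hsk) hd (by linarith)
  set B := F - k * τm - s * τp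
  calc min (F - k * τm) ((1 - exp ((s - k) / k)) * F + exp ((s - k) / k) * s * τp)
      = F - k * τm + min 0 (exp (-(k - s) / k) * (τm * (k * (exp ((k - s) / k) - 1)) - B)) := by
        rw [← min_add_add_left, add_zero, show (s - k) / k = -(k - s) / k by ring]
        congr 1
        linear_combination (-(k * τm)) * hinv k
    _ ≤ F - k * τm + exp (-(k - s) / (k - x)) *
          (τm * ((k - x) * (exp ((k - s) / (k - x)) - 1)) - B) := by
        gcongr
        exact min_zero_le_mul_of_le (exp_pos _).le hweight
          (sub_le_sub_right (mul_le_mul_of_nonneg_left hslope hτm) B)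
    _ = _ := by linear_combination (τm * (k - x)) * hinv (k - x)

/-- Endpoint-minimum proposition: under `F ≥ k τ⁻ + s τ⁺`, for every `x ∈ [0, k)` the
bound function `g` is at least the minimum of its two endpoint values
`g(k) = F − k τ⁻` and `g(0) = (1 − e^{(s−k)/k}) F + e^{(s−k)/k} s τ⁺`. -/
theorem bound_min_at_endpoints (k s τm τp F : ℝ) (hk : 0 < k)
    (hs0 : 0 ≤ s) (hsk : s ≤ k) (hτm : 0 ≤ τm) (hτp : 0 ≤ τp)
    (hF : k * τm + s * τp ≤ F) :
    ∀ x : ℝ, 0 ≤ x → x < k →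
      min (F - k * τm) ((1 - Real.exp ((s - k) / k)) * F + Real.exp ((s - k) / k) * s * τp)
        ≤ (1 - Real.exp (-(k - s) / (k - x))) * (F - x * τm)
          + Real.exp (-(k - s) / (k - x)) * s * τp :=
  bound_min_at_endpoints_general k s τm τp F hsk hτm
end

section
/- For every real t with 0 ≤ t ≤ 1, exp(1 − t) ≤ 1 + 2·(1 − t)/(1 + t). Equivalently, for reals 0 ≤ s ≤ k with k > 0, the quantity h(s) = 1 − exp((k−s)/k) + 2(k−s)/(k+s) is nonnegative. -/
open Real

lemma key_exp_ineq : ∀ x : ℝ, 0 ≤ x → x ≤ 1 → Real.exp x ≤ (2 + x) / (2 - x) := by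
  intro x hx hx1
  have hb := Real.exp_bound' hx hx1 (n := 3) (by norm_num)
  have hsum : (∑ m ∈ Finset.range 3, x ^ m / m.factorial) = 1 + x + x ^ 2 / 2 := by
    simp [Finset.sum_range_succ, Nat.factorial]
  rw [hsum] at hb
  norm_num [Nat.factorial] at hb
  have h2 : (0:ℝ) < 2 - x := by linarith
  rw [le_div_iff₀ h2]
  nlinarith [pow_nonneg hx 3, pow_nonneg hx 4, sq_nonneg x, mul_le_one₀ hx1 (pow_nonneg hx 3) (pow_le_one₀ hx hx1)]

/-- Scalar inequality: for `0 ≤ t ≤ 1`, `exp(1 − t) ≤ 1 + 2(1−t)/(1+t)`; equivalently,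
for `0 ≤ s ≤ k` with `k > 0`, `h(s) = 1 − exp((k−s)/k) + 2(k−s)/(k+s)` is nonnegative. -/
theorem exp_one_sub_le_one_add_two_div :
    (∀ t : ℝ, 0 ≤ t → t ≤ 1 → Real.exp (1 - t) ≤ 1 + 2 * (1 - t) / (1 + t)) ∧
    (∀ k s : ℝ, 0 < k → 0 ≤ s → s ≤ k →
      0 ≤ 1 - Real.exp ((k - s) / k) + 2 * (k - s) / (k + s)) := by
  have main : ∀ t : ℝ, 0 ≤ t → t ≤ 1 → Real.exp (1 - t) ≤ 1 + 2 * (1 - t) / (1 + t) := by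
    intro t ht ht1
    have h := key_exp_ineq (1 - t) (by linarith) (by linarith)
    have h1 : (1:ℝ) + t ≠ 0 := by linarith
    have : (2 + (1 - t)) / (2 - (1 - t)) = 1 + 2 * (1 - t) / (1 + t) := by
      rw [show (2:ℝ) - (1 - t) = 1 + t by ring, show (2:ℝ) + (1 - t) = (1 + t) + 2 * (1 - t) by ring,
        add_div, div_self h1]
    linarith [this ▸ h]
  refine ⟨main, fun k s hk hs hsk => ?_⟩
  have ht : (0:ℝ) ≤ s / k := div_nonneg hs hk.le
  have ht1 : s / k ≤ 1 := (div_le_one hk).2 hsk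
  have h := main (s / k) ht ht1
  have e1 : (k - s) / k = 1 - s / k := by field_simp
  have e2 : 2 * (k - s) / (k + s) = 2 * (1 - s / k) / (1 + s / k) := by
    have h3 : k + s ≠ 0 := by linarith
    have h4 : k ≠ 0 := hk.ne'
    field_simp
  rw [e1, e2]
  linarith
end

section
/- Let V be a finite type and f : Finset V → ℝ a normalized, monotone non-decreasing, submodular set function. Let k be a positive integer and S* ⊆ V with |S*| ≤ k. Let S₀, B ⊆ V be finite sets with m = |S₀| ≤ k, let kₙ = |(S* \ S₀) \ B|, and assume kₙ < k. Let τ⁻ ≥ 0 and τ⁺ be reals such that: (i) f(S₀ ∪ {v}) − f(S₀) ≤ τ⁻ for every v ∈ (S* \ S₀) \ B; and (ii) f(S₀) ≥ m·τ⁺. Let T : ℕ → Finset V be a greedy chain with T(0) = S₀ such that for every j < k − m there exists v_j ∈ B \ T(j) with T(j+1) = T(j) ∪ {v_j} and f(T(j) ∪ {v}) ≤ f(T(j+1)) for all v ∈ B \ T(j). Then f(T(k − m)) ≥ (1 − exp(−(k−m)/(k−kₙ)))·(f(S*) − kₙ·τ⁻) + exp(−(k−m)/(k−kₙ))·m·τ⁺.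 -/
open Real Finset

lemma marg_sum_aux {V : Type*} [DecidableEq V] (f : Finset V → ℝ)
    (hmono : ∀ A B : Finset V, A ⊆ B → f A ≤ f B)
    (hsub : ∀ (A B : Finset V) (v : V), A ⊆ B → v ∉ B →
      f (B ∪ {v}) - f B ≤ f (A ∪ {v}) - f A)
    (D A : Finset V) : f (A ∪ D) - f A ≤ ∑ v ∈ D, (f (A ∪ {v}) - f A) := by
  induction D using Finset.induction_on with
  | empty => simp
  | @insert a s ha ih =>
    rw [Finset.sum_insert ha]
    have hun : A ∪ insert a s = (A ∪ s) ∪ {a} := by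
      ext x; simp [Finset.mem_insert, Finset.mem_union]
    by_cases haAs : a ∈ A ∪ s
    · have : (A ∪ s) ∪ {a} = A ∪ s := by
        apply Finset.union_eq_left.mpr; simpa using haAs
      have h0 : 0 ≤ f (A ∪ {a}) - f A := by
        have := hmono A (A ∪ {a}) Finset.subset_union_left; linarith
      rw [hun, this]; linarith
    · have := hsub A (A ∪ s) a Finset.subset_union_left haAs
      rw [hun]; linarith

/-- Theorem 1 (approximation bound of the naïve stream clipper): if the final greedy
completion adds `k − |S₀|` buffer elements greedily to the streaming solution `S₀`,
then the final value is at least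
`(1 − e^{−(k−m)/(k−kₙ)})(f(S*) − kₙ τ⁻) + e^{−(k−m)/(k−kₙ)} m τ⁺`. -/
theorem stream_clipper_bound {V : Type*} [Fintype V] [DecidableEq V]
    (f : Finset V → ℝ)
    (hnorm : f ∅ = 0)
    (hmono : ∀ A B : Finset V, A ⊆ B → f A ≤ f B)
    (hsub : ∀ (A B : Finset V) (v : V), A ⊆ B → v ∉ B →
      f (B ∪ {v}) - f B ≤ f (A ∪ {v}) - f A)
    (k : ℕ) (hk : 0 < k)
    (Sstar : Finset V) (hSstar : Sstar.card ≤ k)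
    (S₀ B : Finset V) (m : ℕ) (hm : m = S₀.card) (hmk : m ≤ k)
    (kn : ℕ) (hkn : kn = ((Sstar \ S₀) \ B).card) (hknk : kn < k)
    (τm τp : ℝ) (hτm : 0 ≤ τm)
    (hreject : ∀ v ∈ (Sstar \ S₀) \ B, f (S₀ ∪ {v}) - f S₀ ≤ τm)
    (hS₀ : (m : ℝ) * τp ≤ f S₀)
    (T : ℕ → Finset V) (hT0 : T 0 = S₀)
    (hgreedy : ∀ j < k - m, ∃ v ∈ B \ T j,
      T (j + 1) = T j ∪ {v} ∧ ∀ w ∈ B \ T j, f (T j ∪ {w}) ≤ f (T (j + 1))) :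
    (1 - Real.exp (-((k : ℝ) - m) / ((k : ℝ) - kn))) * (f Sstar - kn * τm)
      + Real.exp (-((k : ℝ) - m) / ((k : ℝ) - kn)) * m * τp
      ≤ f (T (k - m)) := by
  set t : ℕ := k - m with ht
  set c : ℕ := k - kn with hc
  have hc1 : 1 ≤ c := by omega
  have hc0 : (0:ℝ) < (c:ℝ) := by exact_mod_cast hc1.trans_lt' (by norm_num)
  have hc1' : (1:ℝ) ≤ (c:ℝ) := by exact_mod_cast hc1
  -- structural facts
  have hstruct : ∀ j ≤ t, S₀ ⊆ T j ∧ T j ⊆ S₀ ∪ B := by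
    intro j
    induction j with
    | zero => intro _; rw [hT0]; exact ⟨subset_rfl, Finset.subset_union_left⟩
    | succ j ih =>
      intro hj
      have hj' : j < t := by omega
      obtain ⟨v, hv, hTs, _⟩ := hgreedy j hj'
      obtain ⟨h1, h2⟩ := ih (le_of_lt hj')
      rw [hTs]
      refine ⟨h1.trans Finset.subset_union_left, Finset.union_subset h2 ?_⟩
      simp only [Finset.singleton_subset_iff, Finset.mem_union]
      exact Or.inr (Finset.mem_sdiff.mp hv).1
  set r : ℝ := 1 - 1/(c:ℝ) with hr
  have hr0 : 0 ≤ r := by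
    have h : 1/(c:ℝ) ≤ 1 := by
      rw [div_le_one hc0]; exact hc1'
    rw [hr]; linarith
  -- key per-step bound
  have key : ∀ j < t, f Sstar - (kn:ℝ) * τm - f (T j) ≤ (c:ℝ) * (f (T (j+1)) - f (T j)) := by
    intro j hj
    obtain ⟨v, hv, hTs, hbest⟩ := hgreedy j hj
    obtain ⟨hS₀T, hTSB⟩ := hstruct j (le_of_lt hj)
    have hδ0 : 0 ≤ f (T (j+1)) - f (T j) := by
      have := hmono (T j) (T (j+1)) (by rw [hTs]; exact Finset.subset_union_left)
      linarith
    have h1 : f Sstar ≤ f (T j ∪ (Sstar \ T j)) := by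
      apply hmono
      intro x hx
      simp only [Finset.mem_union, Finset.mem_sdiff]
      by_cases hxT : x ∈ T j
      · exact Or.inl hxT
      · exact Or.inr ⟨hx, hxT⟩
    have h2 := marg_sum_aux f hmono hsub (Sstar \ T j) (T j)
    set D := Sstar \ T j with hD
    set g : V → ℝ := fun v => f (T j ∪ {v}) - f (T j) with hg
    have hsplit : ∑ v ∈ D, g v
        = ∑ v ∈ D.filter (fun x => x ∈ B), g v + ∑ v ∈ D.filter (fun x => x ∉ B), g v :=
      (Finset.sum_filter_add_sum_filter_not D _ g).symm
    -- the not-B part equals (Sstar \ S₀) \ B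
    have hfeq : D.filter (fun x => x ∉ B) = (Sstar \ S₀) \ B := by
      ext x
      simp only [Finset.mem_filter, Finset.mem_sdiff, hD]
      constructor
      · rintro ⟨⟨hx1, hx2⟩, hx3⟩
        exact ⟨⟨hx1, fun h => hx2 (hS₀T h)⟩, hx3⟩
      · rintro ⟨⟨hx1, hx2⟩, hx3⟩
        refine ⟨⟨hx1, fun h => ?_⟩, hx3⟩
        rcases Finset.mem_union.mp (hTSB h) with h' | h'
        · exact hx2 h'
        · exact hx3 h'
    have hcard1 : (D.filter (fun x => x ∉ B)).card = kn := by rw [hfeq, hkn]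
    have hcardD : D.card ≤ k := le_trans (Finset.card_le_card (Finset.sdiff_subset)) hSstar
    have hcard2 : (D.filter (fun x => x ∈ B)).card ≤ c := by
      have := Finset.card_filter_add_card_filter_not (s := D) (p := fun x => x ∈ B)
      omega
    -- bound sum over not-B part
    have hb1 : ∑ v ∈ D.filter (fun x => x ∉ B), g v ≤ (kn:ℝ) * τm := by
      have : ∀ v ∈ D.filter (fun x => x ∉ B), g v ≤ τm := by
        intro w hw
        rw [hfeq] at hw
        have hwT : w ∉ T j := by
          have hw' := hw
          rw [← hfeq] at hw'
          exact (Finset.mem_sdiff.mp (Finset.mem_filter.mp hw').1).2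
        have := hsub S₀ (T j) w hS₀T hwT
        have := hreject w hw
        simp only [hg]
        linarith
      calc ∑ v ∈ D.filter (fun x => x ∉ B), g v
          ≤ (D.filter (fun x => x ∉ B)).card • τm := Finset.sum_le_card_nsmul _ _ _ this
        _ = (kn:ℝ) * τm := by rw [hcard1, nsmul_eq_mul]
    -- bound sum over B part
    have hb2 : ∑ v ∈ D.filter (fun x => x ∈ B), g v ≤ (c:ℝ) * (f (T (j+1)) - f (T j)) := by
      have hterm : ∀ v ∈ D.filter (fun x => x ∈ B), g v ≤ f (T (j+1)) - f (T j) := by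
        intro w hw
        obtain ⟨hwD, hwB⟩ := Finset.mem_filter.mp hw
        have hwBT : w ∈ B \ T j :=
          Finset.mem_sdiff.mpr ⟨hwB, (Finset.mem_sdiff.mp hwD).2⟩
        have := hbest w hwBT
        simp only [hg]; linarith
      calc ∑ v ∈ D.filter (fun x => x ∈ B), g v
          ≤ (D.filter (fun x => x ∈ B)).card • (f (T (j+1)) - f (T j)) :=
            Finset.sum_le_card_nsmul _ _ _ hterm
        _ ≤ (c:ℝ) * (f (T (j+1)) - f (T j)) := by
            rw [nsmul_eq_mul]
            exact mul_le_mul_of_nonneg_right (by exact_mod_cast hcard2) hδ0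
    have := h2
    rw [hsplit] at this
    linarith
  -- geometric decay
  have hiter : ∀ j ≤ t, f Sstar - (kn:ℝ) * τm - f (T j)
      ≤ r^j * (f Sstar - (kn:ℝ) * τm - f S₀) := by
    intro j
    induction j with
    | zero => intro _; rw [hT0]; simp
    | succ j ih =>
      intro hj
      have hj' : j < t := by omega
      have hkey := key j hj'
      have hstep : f Sstar - (kn:ℝ) * τm - f (T (j+1))
          ≤ r * (f Sstar - (kn:ℝ) * τm - f (T j)) := by
        have hlin : (c:ℝ) * (f Sstar - (kn:ℝ) * τm - f (T (j+1)))
            ≤ ((c:ℝ) - 1) * (f Sstar - (kn:ℝ) * τm - f (T j)) := by nlinarith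
        have hre : r = ((c:ℝ) - 1) / (c:ℝ) := by
          rw [hr]; field_simp
        rw [hre, ← sub_nonneg]
        have : ((c:ℝ) - 1) / (c:ℝ) * (f Sstar - (kn:ℝ) * τm - f (T j))
            - (f Sstar - (kn:ℝ) * τm - f (T (j+1)))
            = ((((c:ℝ) - 1) * (f Sstar - (kn:ℝ) * τm - f (T j))
              - (c:ℝ) * (f Sstar - (kn:ℝ) * τm - f (T (j+1))))) / (c:ℝ) := by
          field_simp
        rw [this]
        apply div_nonneg _ (le_of_lt hc0)
        linarith
      calc f Sstar - (kn:ℝ) * τm - f (T (j+1))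
          ≤ r * (f Sstar - (kn:ℝ) * τm - f (T j)) := hstep
        _ ≤ r * (r^j * (f Sstar - (kn:ℝ) * τm - f S₀)) :=
            mul_le_mul_of_nonneg_left (ih (le_of_lt hj')) hr0
        _ = r^(j+1) * (f Sstar - (kn:ℝ) * τm - f S₀) := by ring
  -- cast rewriting
  have hcastc : (k:ℝ) - (kn:ℝ) = (c:ℝ) := by
    rw [hc, Nat.cast_sub hknk.le]
  have hcastt : (k:ℝ) - (m:ℝ) = (t:ℝ) := by
    rw [ht, Nat.cast_sub hmk]
  rw [hcastc, hcastt]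
  set E : ℝ := Real.exp (-(t:ℝ) / (c:ℝ)) with hE
  have hE0 : 0 < E := Real.exp_pos _
  have hE1 : E ≤ 1 := by
    rw [hE, Real.exp_le_one_iff]
    apply div_nonpos_of_nonpos_of_nonneg
    · simp
    · exact le_of_lt hc0
  have hrt0 : 0 ≤ r^t := pow_nonneg hr0 t
  have hrtE : r^t ≤ E := by
    have h1 : r ≤ Real.exp (-(1/(c:ℝ))) := by
      have := Real.add_one_le_exp (-(1/(c:ℝ)))
      rw [hr]; linarith
    calc r^t ≤ (Real.exp (-(1/(c:ℝ))))^t := pow_le_pow_left₀ hr0 h1 t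
      _ = Real.exp ((t:ℕ) * (-(1/(c:ℝ)))) := (Real.exp_nat_mul _ t).symm
      _ = E := by rw [hE]; congr 1; ring
  have hft := hiter t le_rfl
  set A : ℝ := f Sstar - (kn:ℝ) * τm with hA
  rcases le_or_gt ((m:ℝ) * τp) A with hcase | hcase
  · have hint1 : r^t * (A - f S₀) ≤ r^t * (A - (m:ℝ)*τp) :=
      mul_le_mul_of_nonneg_left (by linarith) hrt0
    have hint2 : r^t * (A - (m:ℝ)*τp) ≤ E * (A - (m:ℝ)*τp) :=
      mul_le_mul_of_nonneg_right hrtE (by linarith)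
    nlinarith [hft, hint1, hint2]
  · have hTm : f S₀ ≤ f (T t) := hmono _ _ (hstruct t le_rfl).1
    have h1E : 0 ≤ 1 - E := by linarith
    nlinarith [mul_le_mul_of_nonneg_left hcase.le h1E, hTm, hS₀]
end

section
/- Let V be a finite type and f : Finset V → ℝ a normalized, monotone non-decreasing, submodular set function. Let k be a positive integer, S* ⊆ V with |S*| ≤ k, and S₀, B, T ⊆ V finite sets with S₀ ⊆ T and B \ T nonempty. Let kₙ = |(S* \ S₀) \ B| and let τ⁻ ≥ 0 satisfy f(S₀ ∪ {v}) − f(S₀) ≤ τ⁻ for every v ∈ (S* \ S₀) \ B. If v* ∈ B \ T satisfies f(T ∪ {v}) ≤ f(T ∪ {v*}) for all v ∈ B \ T, then f(S*) ≤ f(T) + kₙ·τ⁻ + (k − kₙ)·(f(T ∪ {v*}) − f(T)). -/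
open Real Finset

/-!
By monotonicity and submodularity, `f S*` is at most `f T` plus the sum of the marginal gains
over `T` of the elements of `S* \ T`. An element outside the buffer gains at most `τ⁻` over `T ⊇ S₀`,
and there are at most `kₙ` of them; an element of `B \ T` gains at most the greedy gain of `v*`,
and these lie in `S* ∩ B`, which is disjoint from the `kₙ` elements of `(S* \ S₀) \ B`.
-/

theorem submodular_union_le_add_sum_gain {V : Type*} [DecidableEq V] (f : Finset V → ℝ)
    (hsub : ∀ (A B : Finset V) (v : V), A ⊆ B → v ∉ B →
      f (B ∪ {v}) - f B ≤ f (A ∪ {v}) - f A)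
    (T A : Finset V) (hTA : Disjoint T A) :
    f (T ∪ A) ≤ f T + ∑ v ∈ A, (f (T ∪ {v}) - f T) := by
  induction A using Finset.induction_on with
  | empty => simp
  | insert a A ha ih =>
    rw [disjoint_insert_right] at hTA
    have haTA : a ∉ T ∪ A := by simp [hTA.1, ha]
    have hstep := hsub T (T ∪ A) a subset_union_left haTA
    rw [sum_insert ha, show T ∪ insert a A = T ∪ A ∪ {a} by ext; simp]
    linarith [ih hTA.2]

theorem sum_le_mul_of_le_of_card_le {ι R : Type*} [Semiring R] [PartialOrder R]
    [IsOrderedRing R] {s : Finset ι} {a : ι → R} {c : R} {m : ℕ} (hc : 0 ≤ c)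
    (ha : ∀ i ∈ s, a i ≤ c) (hs : s.card ≤ m) : ∑ i ∈ s, a i ≤ m * c := by
  grw [sum_le_card_nsmul s a c ha, nsmul_eq_mul, hs]

theorem card_inter_add_card_sdiff_le {α : Type*} [DecidableEq α] {S A C : Finset α}
    (B : Finset α) (hA : A ⊆ S) (hC : C ⊆ S) : (A ∩ B).card + (C \ B).card ≤ S.card := by
  grw [← card_inter_add_card_sdiff S B, inter_subset_inter_right hA, sdiff_subset_sdiff hC le_rfl]

theorem stream_clipper_greedy_step_general {V : Type*} [DecidableEq V]
    (f : Finset V → ℝ)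
    (hmono : ∀ A B : Finset V, A ⊆ B → f A ≤ f B)
    (hsub : ∀ (A B : Finset V) (v : V), A ⊆ B → v ∉ B →
      f (B ∪ {v}) - f B ≤ f (A ∪ {v}) - f A)
    (k : ℕ)
    (Sstar : Finset V) (hSstar : Sstar.card ≤ k)
    (S₀ B T : Finset V) (hS₀T : S₀ ⊆ T)
    (kn : ℕ) (hkn : kn = ((Sstar \ S₀) \ B).card)
    (τm : ℝ) (hτm : 0 ≤ τm)
    (hreject : ∀ v ∈ (Sstar \ S₀) \ B, f (S₀ ∪ {v}) - f S₀ ≤ τm)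
    (vstar : V)
    (hmax : ∀ v ∈ B \ T, f (T ∪ {v}) ≤ f (T ∪ {vstar})) :
    f Sstar ≤ f T + kn * τm + ((k : ℝ) - kn) * (f (T ∪ {vstar}) - f T) := by
  have hcard := card_inter_add_card_sdiff_le B (sdiff_subset : Sstar \ T ⊆ Sstar)
    (sdiff_subset : Sstar \ S₀ ⊆ Sstar)
  have hunion : f Sstar ≤ f T + ∑ v ∈ Sstar \ T, (f (T ∪ {v}) - f T) := by
    grw [hmono Sstar (T ∪ (Sstar \ T)) (by simp)]
    exact submodular_union_le_add_sum_gain f hsub T _ disjoint_sdiff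
  have hrejected : ∑ v ∈ (Sstar \ T) \ B, (f (T ∪ {v}) - f T) ≤ kn * τm := by
    refine sum_le_mul_of_le_of_card_le hτm (fun v hv ↦ ?_) ?_
    · simp only [mem_sdiff] at hv
      have hvS₀ : v ∉ S₀ := fun h ↦ hv.1.2 (hS₀T h)
      linarith [hsub S₀ T v hS₀T hv.1.2, hreject v (by simp [hv.1.1, hvS₀, hv.2])]
    · exact hkn ▸ card_le_card (sdiff_subset_sdiff (sdiff_subset_sdiff le_rfl hS₀T) le_rfl)
  have hbuffered : ∑ v ∈ (Sstar \ T) ∩ B, (f (T ∪ {v}) - f T) ≤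
      ((k - kn : ℕ) : ℝ) * (f (T ∪ {vstar}) - f T) := by
    refine sum_le_mul_of_le_of_card_le (sub_nonneg.2 (hmono _ _ subset_union_left))
      (fun v hv ↦ ?_) ?_
    · simp only [mem_inter, mem_sdiff] at hv
      linarith [hmax v (by simp [hv.1.2, hv.2])]
    · omega
  rw [← sum_inter_add_sum_sdiff (Sstar \ T) B] at hunion
  push_cast [show kn ≤ k by omega] at hbuffered
  linarith

/-- Single-step inequality of the greedy completion phase of the stream clipper:
`f(S*) ≤ f(T) + kₙ τ⁻ + (k − kₙ)(f(T ∪ {v*}) − f(T))` for the greedily chosen `v*`. -/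
theorem stream_clipper_greedy_step {V : Type*} [Fintype V] [DecidableEq V]
    (f : Finset V → ℝ)
    (hnorm : f ∅ = 0)
    (hmono : ∀ A B : Finset V, A ⊆ B → f A ≤ f B)
    (hsub : ∀ (A B : Finset V) (v : V), A ⊆ B → v ∉ B →
      f (B ∪ {v}) - f B ≤ f (A ∪ {v}) - f A)
    (k : ℕ) (hk : 0 < k)
    (Sstar : Finset V) (hSstar : Sstar.card ≤ k)
    (S₀ B T : Finset V) (hS₀T : S₀ ⊆ T) (hBT : (B \ T).Nonempty)
    (kn : ℕ) (hkn : kn = ((Sstar \ S₀) \ B).card)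
    (τm : ℝ) (hτm : 0 ≤ τm)
    (hreject : ∀ v ∈ (Sstar \ S₀) \ B, f (S₀ ∪ {v}) - f S₀ ≤ τm)
    (vstar : V) (hvstar : vstar ∈ B \ T)
    (hmax : ∀ v ∈ B \ T, f (T ∪ {v}) ≤ f (T ∪ {vstar})) :
    f Sstar ≤ f T + kn * τm + ((k : ℝ) - kn) * (f (T ∪ {vstar}) - f T) :=
  stream_clipper_greedy_step_general f hmono hsub k Sstar hSstar S₀ B T hS₀T kn hkn τm hτm hreject
    vstar hmax
end

section
/- Let k, s, τ⁻, τ⁺, F be real numbers with k > 0, 0 ≤ s ≤ k, τ⁻ ≥ 0, τ⁺ ≥ 0, F ≥ k·τ⁻ + s·τ⁺, and F ≤ exp((k−s)/k)·k·τ⁻ + s·τ⁺. Then for every x with 0 ≤ x < k, g(x) ≥ F − k·τ⁻. -/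
open Real

/-!
With `y = k - x`, the claim rearranges to `e^{-(k-s)/y} (F - s τ⁺ - x τ⁻) ≤ y τ⁻`. By the upper
bound on `F` it suffices that `k (e^{(k-s)/k} - 1) ≤ y (e^{(k-s)/y} - 1)` for `0 < y ≤ k`, which is
convexity of `exp` between `0` and `(k-s)/y`.
-/

/-- Write `c / k` as the convex combination `(y / k) • (c / y) + (1 - y / k) • 0` and apply
convexity of `exp`. -/
lemma mul_exp_div_sub_le_mul_exp_div_sub (c : ℝ) {y k : ℝ} (hy : 0 < y) (hyk : y ≤ k) :
    k * exp (c / k) - k ≤ y * exp (c / y) - y := by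
  have hk : 0 < k := hy.trans_le hyk
  have hconv := convexOn_exp.2 (Set.mem_univ (c / y)) (Set.mem_univ 0)
    (div_nonneg hy.le hk.le) (sub_nonneg.2 ((div_le_one hk).2 hyk)) (add_sub_cancel _ _)
  have hck : y / k * (c / y) = c / k := by field_simp
  simp only [smul_eq_mul, mul_zero, add_zero, exp_zero, mul_one, hck] at hconv
  have := mul_le_mul_of_nonneg_left hconv hk.le
  field_simp at this
  linarith

theorem case2_bound_general (k s τm τp F : ℝ) (hτm : 0 ≤ τm)
    (hF2 : F ≤ Real.exp ((k - s) / k) * k * τm + s * τp) :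
    ∀ x : ℝ, 0 ≤ x → x < k →
      F - k * τm ≤ (1 - Real.exp (-(k - s) / (k - x))) * (F - x * τm)
        + Real.exp (-(k - s) / (k - x)) * s * τp := by
  intro x hx0 hxk
  have hy : 0 < k - x := sub_pos.2 hxk
  set A := exp ((k - s) / (k - x))
  have hslack : F - s * τp - x * τm ≤ A * (k - x) * τm := by
    have hexp := mul_le_mul_of_nonneg_right
      (mul_exp_div_sub_le_mul_exp_div_sub (k - s) hy (sub_le_self k hx0)) hτm
    linarith
  have hscaled : A⁻¹ * (F - s * τp - x * τm) ≤ (k - x) * τm := by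
    calc A⁻¹ * (F - s * τp - x * τm) ≤ A⁻¹ * (A * (k - x) * τm) :=
          mul_le_mul_of_nonneg_left hslack (inv_nonneg.2 (exp_pos _).le)
      _ = (k - x) * τm := by rw [mul_assoc, inv_mul_cancel_left₀ (exp_pos _).ne']
  rw [neg_div, exp_neg]
  linarith

/-- Case 2 of the stream clipper analysis: when
`k τ⁻ + s τ⁺ ≤ F ≤ e^{(k−s)/k} k τ⁻ + s τ⁺`, the bound function `g` satisfies
`g(x) ≥ F − k τ⁻` for every `x ∈ [0, k)`. -/
theorem case2_bound (k s τm τp F : ℝ) (hk : 0 < k)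
    (hs0 : 0 ≤ s) (hsk : s ≤ k) (hτm : 0 ≤ τm) (hτp : 0 ≤ τp)
    (hF1 : k * τm + s * τp ≤ F) (hF2 : F ≤ Real.exp ((k - s) / k) * k * τm + s * τp) :
    ∀ x : ℝ, 0 ≤ x → x < k →
      F - k * τm ≤ (1 - Real.exp (-(k - s) / (k - x))) * (F - x * τm)
        + Real.exp (-(k - s) / (k - x)) * s * τp :=
  case2_bound_general k s τm τp F hτm hF2
end

section
/- Let k, s, τ⁻, τ⁺, F be real numbers with k > 0, 0 ≤ s ≤ k, τ⁻ ≥ 0, τ⁺ ≥ 0, and F ≥ exp((k−s)/k)·k·τ⁻ + s·τ⁺. Then for every x with 0 ≤ x < k, g(x) ≥ (1 − exp((s−k)/k))·F + exp((s−k)/k)·s·τ⁺. -/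
set_option maxHeartbeats 1000000


open Real

/-- Key convexity fact: `(e^t - 1)/t` is increasing, in product form. -/
lemma exp_key (a t : ℝ) (ha : 0 ≤ a) (hat : a ≤ t) :
    t * (Real.exp a - 1) ≤ a * (Real.exp t - 1) := by
  have hd : 0 ≤ t - a := by linarith
  have h1 : t - a + 1 ≤ Real.exp (t - a) := Real.add_one_le_exp _
  have h2 : (-a) + 1 ≤ Real.exp (-a) := Real.add_one_le_exp _
  have hea : 0 < Real.exp a := Real.exp_pos a
  have hmul : Real.exp t = Real.exp a * Real.exp (t - a) := by
    rw [← Real.exp_add]; ring_nf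
  have hinv : Real.exp (-a) * Real.exp a = 1 := by
    rw [← Real.exp_add]; simp
  -- a * e^a ≥ e^a - 1
  have h3 : Real.exp a - 1 ≤ a * Real.exp a := by nlinarith
  -- e^(t-a) - 1 ≥ t - a
  nlinarith [mul_le_mul_of_nonneg_left h1 (mul_nonneg ha hea.le),
    mul_le_mul_of_nonneg_left h3 hd]

/-- Case 3 of the stream clipper analysis: when `F ≥ e^{(k−s)/k} k τ⁻ + s τ⁺`, the
bound function `g` satisfies `g(x) ≥ (1 − e^{(s−k)/k}) F + e^{(s−k)/k} s τ⁺` for every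
`x ∈ [0, k)`. -/
theorem case3_bound (k s τm τp F : ℝ) (hk : 0 < k)
    (hs0 : 0 ≤ s) (hsk : s ≤ k) (hτm : 0 ≤ τm) (hτp : 0 ≤ τp)
    (hF : Real.exp ((k - s) / k) * k * τm + s * τp ≤ F) :
    ∀ x : ℝ, 0 ≤ x → x < k →
      (1 - Real.exp ((s - k) / k)) * F + Real.exp ((s - k) / k) * s * τp
        ≤ (1 - Real.exp (-(k - s) / (k - x))) * (F - x * τm)
          + Real.exp (-(k - s) / (k - x)) * s * τp := by
  intro x hx0 hxk
  have hkx : 0 < k - x := by linarith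
  set A : ℝ := (k - s) / k with hA
  set T : ℝ := (k - s) / (k - x) with hT
  have hA0 : 0 ≤ A := div_nonneg (by linarith) hk.le
  have hAT : A ≤ T := by
    apply div_le_div_of_nonneg_left (by linarith) hkx (by linarith)
  have hT0 : 0 ≤ T := le_trans hA0 hAT
  set u : ℝ := Real.exp A with hu
  set v : ℝ := Real.exp T with hv
  have hu0 : 0 < u := Real.exp_pos A
  have hv0 : 0 < v := Real.exp_pos T
  have hu1 : 1 ≤ u := by rw [hu]; exact Real.one_le_exp hA0
  have huv : u ≤ v := by rw [hu, hv]; exact Real.exp_le_exp.mpr hAT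
  have key : T * (u - 1) ≤ A * (v - 1) := exp_key A T hA0 hAT
  -- rewrite the exponentials in terms of u⁻¹, v⁻¹
  have e1 : Real.exp ((s - k) / k) = u⁻¹ := by
    rw [hu, ← Real.exp_neg, hA]; ring_nf
  have e2 : Real.exp (-(k - s) / (k - x)) = v⁻¹ := by
    rw [hv, ← Real.exp_neg, hT]; ring_nf
  rw [e1, e2]
  -- the geometric relation: x * T = k * (T - A)
  have hxT : x * T = k * (T - A) := by
    have h1 : T * (k - x) = k - s := by
      rw [hT]; field_simp
    have h2 : A * k = k - s := by
      rw [hA]; field_simp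
    nlinarith
  -- step: (v - 1) * x ≤ (v - u) * k
  have step1 : (v - 1) * x ≤ (v - u) * k := by
    rcases eq_or_lt_of_le hT0 with h0 | hTpos
    · have hAz : A = 0 := le_antisymm (hAT.trans h0.symm.le) hA0
      have : u = 1 := by rw [hu, hAz, Real.exp_zero]
      have : v = 1 := by rw [hv, ← h0, Real.exp_zero]
      nlinarith
    · have h2 : (v - 1) * (T - A) ≤ (v - u) * T := by nlinarith
      have h3 : (v - 1) * x * T ≤ (v - u) * k * T := by nlinarith
      exact le_of_mul_le_mul_right h3 hTpos
  have hF' : u * k * τm + s * τp ≤ F := by rwa [hu, hA] at hF ⊢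
  -- main inequality multiplied through by u * v
  refine le_of_mul_le_mul_right ?_ (show (0:ℝ) < u * v by positivity)
  have hiu : u⁻¹ * u = 1 := inv_mul_cancel₀ hu0.ne'
  have hiv : v⁻¹ * v = 1 := inv_mul_cancel₀ hv0.ne'
  have final : u * ((v - 1) * x * τm) ≤ (v - u) * (F - s * τp) := by
    have h4 : u * ((v - 1) * x * τm) ≤ u * ((v - u) * k * τm) := by
      apply mul_le_mul_of_nonneg_left _ hu0.le
      exact mul_le_mul_of_nonneg_right step1 hτm
    have h5 : (v - u) * (u * k * τm) ≤ (v - u) * (F - s * τp) := by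
      apply mul_le_mul_of_nonneg_left (by linarith) (by linarith)
    nlinarith
  have expand1 : ((1 - u⁻¹) * F + u⁻¹ * s * τp) * (u * v)
      = u * v * F - v * F + v * (s * τp) := by
    field_simp
  have expand2 : ((1 - v⁻¹) * (F - x * τm) + v⁻¹ * s * τp) * (u * v)
      = u * v * F - u * v * (x * τm) - u * F + u * (x * τm) + u * (s * τp) := by
    field_simp
    ring
  rw [expand1, expand2]
  nlinarith [final]
end

section
/- Let k, τ⁻, τ⁺, F be real numbers with k > 0, τ⁻ ≥ 0, τ⁺ ≥ 0, and F ≥ e·k·τ⁻. Then for every x with 0 ≤ x < k, (1 − exp(−k/(k−x)))·(F − x·τ⁻) ≥ (1 − 1/e)·F. -/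
open Real

/-- Writing `E = exp 1` and `w = exp (-t)`, the gap between the two sides is
`(F - E t v)(1/E - w) + E v (1/E - t w) + v w (t - 1)`, a sum of nonnegative terms since
`t e^{-t} ≤ e^{-1}`. -/
theorem one_sub_inv_exp_one_mul_le_of_exp_one_mul_le {t v F : ℝ} (ht : 1 ≤ t) (hv : 0 ≤ v)
    (hF : exp 1 * t * v ≤ F) :
    (1 - 1 / exp 1) * F ≤ (1 - exp (-t)) * (F - (t - 1) * v) := by
  have hw : exp (-t) ≤ exp (-1) := exp_le_exp.mpr (by linarith)
  have htw : t * exp (-t) ≤ exp (-1) := mul_exp_neg_le_exp_neg_one t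
  have hinv : exp 1 * exp (-1) = 1 := by rw [← exp_add]; simp
  rw [one_div, ← exp_neg]
  linear_combination mul_nonneg (sub_nonneg.mpr hF) (sub_nonneg.mpr hw) +
    mul_nonneg (mul_nonneg (exp_pos 1).le hv) (sub_nonneg.mpr htw) +
    mul_nonneg (mul_nonneg hv (exp_pos (-t)).le) (sub_nonneg.mpr ht) - (t - 1) * v * hinv

theorem best_bound_case3_general (k τm F : ℝ)
    (hτm : 0 ≤ τm) (hF : Real.exp 1 * k * τm ≤ F) :
    ∀ x : ℝ, 0 ≤ x → x < k →
      (1 - 1 / Real.exp 1) * F ≤ (1 - Real.exp (-k / (k - x))) * (F - x * τm) := by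
  intro x hx hxk
  have hu : 0 < k - x := sub_pos.mpr hxk
  have hkt : k / (k - x) * (k - x) = k := div_mul_cancel₀ k hu.ne'
  have key := one_sub_inv_exp_one_mul_le_of_exp_one_mul_le (t := k / (k - x)) (F := F)
    ((one_le_div hu).mpr (by linarith)) (mul_nonneg hu.le hτm)
    (by linear_combination hF + exp 1 * τm * hkt)
  rwa [neg_div, ← show (k / (k - x) - 1) * ((k - x) * τm) = x * τm by
    linear_combination τm * hkt]

/-- Second part of the best-bound corollary: the Case-3 bound with `s = 0`; if
`F ≥ e k τ⁻`, then `(1 − e^{−k/(k−x)})(F − x τ⁻) ≥ (1 − 1/e) F` for all `x ∈ [0, k)`. -/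
theorem best_bound_case3 (k τm τp F : ℝ) (hk : 0 < k)
    (hτm : 0 ≤ τm) (hτp : 0 ≤ τp) (hF : Real.exp 1 * k * τm ≤ F) :
    ∀ x : ℝ, 0 ≤ x → x < k →
      (1 - 1 / Real.exp 1) * F ≤ (1 - Real.exp (-k / (k - x))) * (F - x * τm) :=
  best_bound_case3_general k τm F hτm hF
end

section
/- Let k > 0, F ≥ 0, and 0 ≤ α ≤ 1/e be real numbers. Then the function s ↦ (1 − α·exp((k−s)/k))·F/s is antitone (non-increasing) on the interval (0, k]. -/
open Real Set

/-! Substituting `t = s / k` and `β = α e` turns the threshold level into `(F / k) · (1 − β e^{−t}) / t`;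
its `t`-derivative `(β (1 + t) e^{−t} − 1) / t²` is nonpositive because `β ≤ 1`
and `1 + t ≤ e^t`. -/

lemma add_one_mul_exp_neg_le_one (t : ℝ) : (t + 1) * exp (-t) ≤ 1 :=
  calc (t + 1) * exp (-t) ≤ exp t * exp (-t) :=
        mul_le_mul_of_nonneg_right (add_one_le_exp t) (exp_pos _).le
    _ = 1 := by rw [← exp_add, add_neg_cancel, exp_zero]

lemma hasDerivAt_one_sub_mul_exp_neg_div (β : ℝ) {t : ℝ} (ht : t ≠ 0) :
    HasDerivAt (fun t => (1 - β * exp (-t)) / t)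
      ((β * ((t + 1) * exp (-t)) - 1) / t ^ 2) t := by
  have hnum : HasDerivAt (fun t => 1 - β * exp (-t)) (β * exp (-t)) t := by
    simpa using (((hasDerivAt_neg t).exp).const_mul β).const_sub 1
  refine (hnum.div (hasDerivAt_id t) ht).congr_deriv ?_
  simp only [id_eq]
  ring

lemma antitoneOn_one_sub_mul_exp_neg_div {β : ℝ} (hβ : β ≤ 1) :
    AntitoneOn (fun t => (1 - β * exp (-t)) / t) (Ioi 0) := by
  have hderiv (t : ℝ) (ht : t ∈ Ioi 0) := hasDerivAt_one_sub_mul_exp_neg_div β (ne_of_gt ht)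
  refine antitoneOn_of_deriv_nonpos (convex_Ioi 0)
    (fun t ht => (hderiv t ht).continuousAt.continuousWithinAt) ?_ ?_
  · rw [interior_Ioi]
    exact fun t ht => (hderiv t ht).differentiableAt.differentiableWithinAt
  · rw [interior_Ioi]
    intro t ht
    rw [(hderiv t ht).deriv]
    have hpos : 0 ≤ (t + 1) * exp (-t) := by
      have : (0 : ℝ) < t := ht
      positivity
    have hβle : β * ((t + 1) * exp (-t)) ≤ 1 :=
      (mul_le_of_le_one_left hpos hβ).trans (add_one_mul_exp_neg_le_one t)
    exact div_nonpos_of_nonpos_of_nonneg (by linarith) (sq_nonneg t)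

theorem threshold_antitone_general (k F α : ℝ) (hk : 0 < k) (hF : 0 ≤ F)
    (hα1 : α ≤ 1 / Real.exp 1) :
    AntitoneOn (fun s : ℝ => (1 - α * Real.exp ((k - s) / k)) * F / s) (Set.Ioc 0 k) := by
  have hαe : α * exp 1 ≤ 1 := (le_div_iff₀ (exp_pos 1)).mp hα1
  have hrescale (s : ℝ) : (1 - α * exp ((k - s) / k)) * F / s
      = F / k * ((1 - α * exp 1 * exp (-(s / k))) / (s / k)) := by
    rw [mul_assoc, ← exp_add]
    field_simp
    ring_nf
  intro a ha b hb hab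
  simp only [hrescale]
  gcongr _ * ?_
  exact antitoneOn_one_sub_mul_exp_neg_div hαe (div_pos ha.1 hk) (div_pos hb.1 hk)
    (div_le_div_of_nonneg_right hab hk.le)

/-- Monotonicity of the τ⁺-threshold level: for `k > 0`, `F ≥ 0` and `0 ≤ α ≤ 1/e`,
the function `s ↦ (1 − α e^{(k−s)/k}) F / s` is antitone on `(0, k]`. -/
theorem threshold_antitone (k F α : ℝ) (hk : 0 < k) (hF : 0 ≤ F)
    (hα0 : 0 ≤ α) (hα1 : α ≤ 1 / Real.exp 1) :
    AntitoneOn (fun s : ℝ => (1 - α * Real.exp ((k - s) / k)) * F / s) (Set.Ioc 0 k) :=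
  threshold_antitone_general k F α hk hF hα1
end

section
/- Let k, s, τ⁻, τ⁺, F, α be real numbers with k > 0, 0 < s ≤ k, τ⁻ ≥ 0, τ⁺ ≥ 0, F ≥ exp((k−s)/k)·k·τ⁻ + s·τ⁺, and s·τ⁺ ≥ (1 − α·exp((k−s)/k))·F. Then for every x with 0 ≤ x < k, g(x) ≥ (1 − α)·F. -/
/-!
Write `c = e^{(k-s)/k}`, `E = e^{-(k-s)/(k-x)}` and `D = F - s τ⁺`. The claim is
`x τ⁻ (1 - E) + E D ≤ α F`, and the hypotheses say `c k τ⁻ ≤ D ≤ c α F`, so it suffices that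
`x (1 - E) + c k E ≤ k`, i.e. `E (c k - x) ≤ k - x`. Since `(k-s)/k ≤ (k-s)/(k-x)`, this is
the monotonicity of the exponential's secant slope `(e^y - 1)/y`, a consequence of convexity.
-/

open Real

theorem mul_exp_div_sub_one_le_of_le {a b d : ℝ} (ha : 0 < a) (hab : a ≤ b) (hd : 0 ≤ d) :
    b * (exp (d / b) - 1) ≤ a * (exp (d / a) - 1) := by
  rcases hd.eq_or_lt with rfl | hd
  · simp
  have hb : 0 < b := ha.trans_le hab
  have hslope : (exp (d / b) - exp 0) / (d / b - 0) ≤ (exp (d / a) - exp 0) / (d / a - 0) :=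
    convexOn_exp.secant_mono (Set.mem_univ _) (Set.mem_univ _) (Set.mem_univ _)
      (by positivity) (by positivity) (div_le_div_of_nonneg_left hd.le ha hab)
  simp only [exp_zero, sub_zero, div_div_eq_mul_div] at hslope
  rwa [mul_comm _ b, mul_comm _ a, div_le_div_iff_of_pos_right hd] at hslope

theorem exp_neg_div_mul_le {a b d : ℝ} (ha : 0 < a) (hab : a ≤ b) (hd : 0 ≤ d) :
    exp (-d / a) * (exp (d / b) * b - (b - a)) ≤ a := by
  have hmono := mul_exp_div_sub_one_le_of_le ha hab hd
  have hinv : exp (-d / a) * exp (d / a) = 1 := by rw [← exp_add, neg_div, neg_add_cancel, exp_zero]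
  calc exp (-d / a) * (exp (d / b) * b - (b - a))
      ≤ exp (-d / a) * (a * exp (d / a)) := by gcongr; linarith
    _ = a := by rw [mul_left_comm, hinv, mul_one]

theorem case3_one_sub_alpha_general (k s τm τp F α : ℝ) (hk : 0 < k)
    (hsk : s ≤ k) (hτm : 0 ≤ τm)
    (hF : Real.exp ((k - s) / k) * k * τm + s * τp ≤ F)
    (hτplevel : (1 - α * Real.exp ((k - s) / k)) * F ≤ s * τp) :
    ∀ x : ℝ, 0 ≤ x → x < k →
      (1 - α) * F ≤ (1 - Real.exp (-(k - s) / (k - x))) * (F - x * τm)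
        + Real.exp (-(k - s) / (k - x)) * s * τp := by
  intro x hx hxk
  have hkey := exp_neg_div_mul_le (sub_pos.2 hxk) (sub_le_self k hx) (sub_nonneg.2 hsk)
  rw [sub_sub_cancel] at hkey
  set c := exp ((k - s) / k)
  set E := exp (-(k - s) / (k - x))
  set D := F - s * τp
  have hc0 : 0 < c := exp_pos _
  have hE1 : E ≤ 1 := exp_le_one_iff.2 (div_nonpos_of_nonpos_of_nonneg (by linarith) (by linarith))
  have hτmD : c * k * τm ≤ D := by linarith
  have hD0 : 0 ≤ D := le_trans (by positivity) hτmD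
  have hDα : D ≤ c * (α * F) := by linarith
  suffices h : k * c * (x * τm * (1 - E) + E * D) ≤ k * c * (α * F) by
    have := le_of_mul_le_mul_left h (mul_pos hk hc0)
    linarith
  calc k * c * (x * τm * (1 - E) + E * D)
      = c * k * τm * (x * (1 - E)) + D * (c * k * E) := by ring
    _ ≤ D * (x * (1 - E)) + D * (c * k * E) := by gcongr
    _ = D * (x + E * (c * k - x)) := by ring
    _ ≤ D * k := by gcongr; linarith
    _ ≤ c * (α * F) * k := by gcongr
    _ = k * c * (α * F) := by ring

/-- Order-dependent `(1−α)`-approximation via Case 3: if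
`F ≥ e^{(k−s)/k} k τ⁻ + s τ⁺` and `s τ⁺ ≥ (1 − α e^{(k−s)/k}) F`, then
`g(x) ≥ (1 − α) F` for every `x ∈ [0, k)`. -/
theorem case3_one_sub_alpha (k s τm τp F α : ℝ) (hk : 0 < k)
    (hs0 : 0 < s) (hsk : s ≤ k) (hτm : 0 ≤ τm) (hτp : 0 ≤ τp)
    (hF : Real.exp ((k - s) / k) * k * τm + s * τp ≤ F)
    (hτplevel : (1 - α * Real.exp ((k - s) / k)) * F ≤ s * τp) :
    ∀ x : ℝ, 0 ≤ x → x < k →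
      (1 - α) * F ≤ (1 - Real.exp (-(k - s) / (k - x))) * (F - x * τm)
        + Real.exp (-(k - s) / (k - x)) * s * τp :=
  case3_one_sub_alpha_general k s τm τp F α hk hsk hτm hF hτplevel
end

section
/- Let k, s, τ⁻, τ⁺, F, α be real numbers with k > 0, 0 ≤ s ≤ k, τ⁻ ≥ 0, τ⁺ ≥ 0, F ≥ k·τ⁻ + s·τ⁺, F ≤ exp((k−s)/k)·k·τ⁻ + s·τ⁺, and k·τ⁻ ≤ α·F. Then for every x with 0 ≤ x < k, g(x) ≥ (1 − α)·F. -/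
open Real

/-- Order-dependent `(1−α)`-approximation via Case 2: if
`k τ⁻ + s τ⁺ ≤ F ≤ e^{(k−s)/k} k τ⁻ + s τ⁺` and `k τ⁻ ≤ α F`, then
`g(x) ≥ (1 − α) F` for every `x ∈ [0, k)`. -/
theorem case2_one_sub_alpha (k s τm τp F α : ℝ) (hk : 0 < k)
    (hs0 : 0 ≤ s) (hsk : s ≤ k) (hτm : 0 ≤ τm) (hτp : 0 ≤ τp)
    (hF1 : k * τm + s * τp ≤ F) (hF2 : F ≤ Real.exp ((k - s) / k) * k * τm + s * τp)
    (hτmlevel : k * τm ≤ α * F) :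
    ∀ x : ℝ, 0 ≤ x → x < k →
      (1 - α) * F ≤ (1 - Real.exp (-(k - s) / (k - x))) * (F - x * τm)
        + Real.exp (-(k - s) / (k - x)) * s * τp := by
  intro x hx0 hxk
  have hkx : 0 < k - x := by linarith
  set t : ℝ := (k - s) / (k - x) with ht
  have hts : 0 ≤ t := div_nonneg (by linarith) hkx.le
  have he : -(k - s) / (k - x) = -t := by rw [ht, neg_div]
  rw [he]
  set e := Real.exp (-t) with hedef
  set E := Real.exp ((k - s) / k) with hEdef
  have he0 : 0 < e := Real.exp_pos _
  have hak : 0 ≤ x / k := div_nonneg hx0 hk.le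
  have hak1 : x / k ≤ 1 := (div_le_one hk).mpr hxk.le
  have hconv : Real.exp ((x/k) * (-t) + (1 - x/k) * 0) ≤
      (x/k) * Real.exp (-t) + (1 - x/k) * Real.exp 0 := by
    have := convexOn_exp.2 (Set.mem_univ (-t)) (Set.mem_univ (0:ℝ)) hak
      (by linarith : (0:ℝ) ≤ 1 - x/k) (by ring)
    simpa [smul_eq_mul] using this
  have hEe : E * e = Real.exp ((x/k) * (-t) + (1 - x/k) * 0) := by
    rw [hEdef, hedef, ← Real.exp_add]
    congr 1
    rw [ht]
    field_simp
    ring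
  have hK : E * e * k ≤ x * e + (k - x) := by
    have h := hEe ▸ hconv
    rw [Real.exp_zero, ← hedef, mul_one] at h
    have h2 : (E * e) * k ≤ ((x/k) * e + (1 - x/k)) * k :=
      mul_le_mul_of_nonneg_right h hk.le
    calc E * e * k ≤ ((x/k) * e + (1 - x/k)) * k := h2
      _ = x * e + (k - x) := by field_simp
  have h1 : e * F ≤ e * (E * k * τm + s * τp) :=
    mul_le_mul_of_nonneg_left hF2 he0.le
  have h3 : (E * e * k) * τm ≤ (x * e + (k - x)) * τm :=
    mul_le_mul_of_nonneg_right hK hτm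
  nlinarith [h1, h3, hτmlevel, mul_nonneg he0.le hτm, mul_nonneg hx0 hτm]
end
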